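/- Let p ≥ 1, let N* be the real vector space of p×p complex skew-Hermitian matrices with Lebesgue (additive Haar) measure μ, and let s be an invertible p×p complex matrix. Then the real-linear map m ↦ sᴴ m s of N* to itself satisfies μ(image of A) = |det s|^{2p} · μ(A) for every measurable set A; in particular, for s lower triangular with positive real diagonal entries s₁₁,…,s_pp, the scaling factor is θ(s)^{2p} with θ(s) = s₁₁·…·s_pp. -/

import Mathlib

open MeasureTheory Matrix Set
open scoped ENNReal

noncomputable section

instance (p : ℕ) : MeasurableSpace (Matrix (Fin p) (Fin p) ℂ) :=
  inferInstanceAs (MeasurableSpace ((Fin p) → (Fin p) → ℂ))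

instance (p : ℕ) : BorelSpace (Matrix (Fin p) (Fin p) ℂ) :=
  inferInstanceAs (BorelSpace ((Fin p) → (Fin p) → ℂ))

/-- `N*`, the real vector space of `p×p` complex skew-Hermitian matrices (`mᴴ = -m`),
of real dimension `p²`. -/
abbrev SkewHerm (p : ℕ) : Type := skewAdjoint (Matrix (Fin p) (Fin p) ℂ)

/-- The Euclidean (Frobenius) norm `‖m‖ = (Tr (m mᴴ))^{1/2}` on matrices. -/
def matNorm {p : ℕ} (m : Matrix (Fin p) (Fin p) ℂ) : ℝ :=
  Real.sqrt ((m * mᴴ).trace.re)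

/-- The function `f₀(m) = e^{-‖m‖} / ‖m‖^{p²/2}` on `N*`. -/
def f₀ (p : ℕ) (m : SkewHerm p) : ℝ :=
  Real.exp (-matNorm (m : Matrix (Fin p) (Fin p) ℂ)) /
    matNorm (m : Matrix (Fin p) (Fin p) ℂ) ^ ((p ^ 2 : ℝ) / 2)

/-- The action `m ↦ sᴴ m s` of a matrix `s` on the space `N*` of skew-Hermitian matrices. -/
def conjAct {p : ℕ} (s : Matrix (Fin p) (Fin p) ℂ) (m : SkewHerm p) : SkewHerm p :=
  ⟨sᴴ * (m : Matrix (Fin p) (Fin p) ℂ) * s, by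
    have hm : (m : Matrix (Fin p) (Fin p) ℂ)ᴴ = -(m : Matrix (Fin p) (Fin p) ℂ) := m.2
    simp [skewAdjoint.mem_iff, Matrix.star_eq_conjTranspose, Matrix.conjTranspose_mul,
      Matrix.mul_assoc, hm]⟩

/-- The operator `T_a(s) f (m) = (‖sᴴ m s‖/‖m‖)^{p²/2} · f(sᴴ m s)` associated with the
multiplicative cocycle `a(m) = ‖m‖^{p²/2}`. -/
def Ta (p : ℕ) (s : Matrix (Fin p) (Fin p) ℂ) (f : SkewHerm p → ℂ) : SkewHerm p → ℂ :=
  fun m =>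
    (((matNorm (sᴴ * (m : Matrix (Fin p) (Fin p) ℂ) * s) /
        matNorm (m : Matrix (Fin p) (Fin p) ℂ)) ^ ((p ^ 2 : ℝ) / 2) : ℝ) : ℂ) *
      f (conjAct s m)


/-!
Every complex matrix is uniquely `x + i y` with `x, y` skew-Hermitian. The complex-linear map
`f m = sᴴ m s` commutes with `ᴴ`, so in these coordinates `f` acts as `L × L`, where `L` is its
restriction to `N*`. Hence `(det L)² = det_ℝ f = |det_ℂ f|²`, and `det_ℂ f = (det sᴴ)^p (det s)^p`
(the matrix of `f` is the Kronecker product `sᴴ ⊗ sᵀ`). So `|det L| = |det s|^{2p}`, which is the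
factor by which the linear map `L` scales any Haar measure.
-/

section SkewAdjoint

open Complex

variable {A : Type*} [AddCommGroup A] [Module ℂ A] [StarAddMonoid A] [StarModule ℂ A]

variable (A) in
def decomposeProdSkewAdjoint : A ≃ₗ[ℝ] skewAdjoint A × skewAdjoint A where
  toFun a := (skewAdjointPart ℝ a, skewAdjointPart ℝ (-I • a))
  invFun x := x.1 + I • (x.2 : A)
  map_add' a b := by simp only [smul_add, map_add, Prod.mk_add_mk]
  map_smul' r a := by simp [← smul_comm r I]
  left_inv a := by
    simp only [skewAdjointPart_apply_coe, star_smul, smul_sub]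
    match_scalars <;> simp [Complex.ext_iff]; norm_num
  right_inv x := by
    have h1 : star (x.1 : A) = -x.1 := x.1.2
    have h2 : star (x.2 : A) = -x.2 := x.2.2
    ext <;> simp [smul_add, star_smul, h1, h2, smul_smul] <;> module

instance [FiniteDimensional ℂ A] : FiniteDimensional ℝ (skewAdjoint A) :=
  have : FiniteDimensional ℝ A := .complexToReal A
  have := Module.Finite.equiv (decomposeProdSkewAdjoint A)
  .of_surjective (LinearMap.fst ℝ (skewAdjoint A) (skewAdjoint A)) LinearMap.fst_surjective

def LinearMap.restrictSkewAdjoint (f : A →ₗ[ℂ] A) (hf : ∀ a, f (star a) = star (f a)) :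
    skewAdjoint A →ₗ[ℝ] skewAdjoint A where
  toFun x := ⟨f (x : A), by rw [skewAdjoint.mem_iff, ← hf, x.2, map_neg]⟩
  map_add' x y := Subtype.ext (map_add f (x : A) y)
  map_smul' r x := Subtype.ext (f.map_smul_of_tower r x)

lemma LinearMap.conj_decomposeProdSkewAdjoint (f : A →ₗ[ℂ] A)
    (hf : ∀ a, f (star a) = star (f a)) :
    (decomposeProdSkewAdjoint A : A →ₗ[ℝ] _) ∘ₗ f.restrictScalars ℝ ∘ₗ
        ((decomposeProdSkewAdjoint A).symm : _ →ₗ[ℝ] A) =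
      (f.restrictSkewAdjoint hf).prodMap (f.restrictSkewAdjoint hf) := by
  refine LinearMap.ext fun x => ?_
  rw [LinearMap.comp_apply, LinearMap.comp_apply, LinearEquiv.coe_coe, LinearEquiv.coe_coe,
    ← LinearEquiv.eq_symm_apply]
  simp [decomposeProdSkewAdjoint, LinearMap.restrictSkewAdjoint]

theorem LinearMap.abs_det_restrictSkewAdjoint [FiniteDimensional ℂ A] (f : A →ₗ[ℂ] A)
    (hf : ∀ a, f (star a) = star (f a)) :
    |(f.restrictSkewAdjoint hf).det| = ‖f.det‖ := by
  have hsq : (f.restrictSkewAdjoint hf).det ^ 2 = ‖f.det‖ ^ 2 := by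
    rw [sq, ← LinearMap.det_prodMap, ← f.conj_decomposeProdSkewAdjoint hf,
      LinearMap.det_conj, LinearMap.det_restrictScalars, Algebra.norm_complex_apply,
      Complex.normSq_eq_norm_sq]
  rw [← Real.sqrt_sq_eq_abs, hsq, Real.sqrt_sq (norm_nonneg _)]

end SkewAdjoint

theorem Matrix.stdBasis_repr_apply {m n R : Type*} [Fintype m] [Finite n] [Semiring R]
    (x : Matrix m n R) (ij : m × n) : (stdBasis R m n).repr x ij = x ij.1 ij.2 := by
  simp [stdBasis, Module.Basis.map_repr, Pi.basis_repr]

open scoped Kronecker in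
theorem Matrix.det_mulLeftRight {n R : Type*} [Fintype n] [DecidableEq n] [CommRing R]
    (a b : Matrix n n R) :
    (LinearMap.mulLeftRight R (a, b)).det = a.det ^ Fintype.card n * b.det ^ Fintype.card n := by
  rw [← LinearMap.det_toMatrix (stdBasis R n n), ← det_transpose b, ← det_kronecker]
  congr 1
  ext ⟨i, k⟩ ⟨j, l⟩
  rw [LinearMap.toMatrix_apply, stdBasis_repr_apply]
  simp [stdBasis_eq_single, mul_apply, single, ite_and]

theorem Matrix.norm_det_eq_prod_re_of_isLowerTriangular {n : Type*} [Fintype n] [LinearOrder n]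
    {s : Matrix n n ℂ} (hs : s.IsLowerTriangular)
    (hdiag : ∀ i, 0 ≤ (s i i).re ∧ (s i i).im = 0) : ‖s.det‖ = ∏ i, (s i i).re := by
  rw [det_of_isLowerTriangular s hs, norm_prod]
  refine Finset.prod_congr rfl fun i _ => ?_
  rw [← Complex.re_add_im (s i i), (hdiag i).2]
  simp [abs_of_nonneg (hdiag i).1]

theorem conjAct_eq_restrictSkewAdjoint {p : ℕ} (s : Matrix (Fin p) (Fin p) ℂ) :
    conjAct s = LinearMap.restrictSkewAdjoint (LinearMap.mulLeftRight ℂ (sᴴ, s))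
      (fun m => by simp [star_eq_conjTranspose, conjTranspose_mul, Matrix.mul_assoc]) :=
  rfl

-- The sup norm: it induces the product topology, for which the `BorelSpace` instance is stated.
instance (p : ℕ) : NormedAddCommGroup (Matrix (Fin p) (Fin p) ℂ) :=
  inferInstanceAs (NormedAddCommGroup (Fin p → Fin p → ℂ))

instance (p : ℕ) : NormedSpace ℝ (Matrix (Fin p) (Fin p) ℂ) :=
  inferInstanceAs (NormedSpace ℝ (Fin p → Fin p → ℂ))

instance (p : ℕ) : NormedSpace ℝ (SkewHerm p) :=
  inferInstanceAs (NormedSpace ℝ (skewAdjoint.submodule ℝ (Matrix (Fin p) (Fin p) ℂ)))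

instance (p : ℕ) : BorelSpace (SkewHerm p) := Subtype.borelSpace _

theorem haar_scaling_conjAct_general (p : ℕ)
    (μ : Measure (SkewHerm p)) [μ.IsAddHaarMeasure]
    (s : Matrix (Fin p) (Fin p) ℂ) :
    (∀ A : Set (SkewHerm p), MeasurableSet A →
      μ (conjAct s '' A) = ENNReal.ofReal (‖s.det‖ ^ (2 * p)) * μ A) ∧
    ((∀ i j : Fin p, i < j → s i j = 0) → (∀ i : Fin p, 0 < (s i i).re ∧ (s i i).im = 0) →
      ∀ A : Set (SkewHerm p), MeasurableSet A →
        μ (conjAct s '' A) = ENNReal.ofReal ((∏ i, (s i i).re) ^ (2 * p)) * μ A) := by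
  have hdet : ‖(LinearMap.mulLeftRight ℂ (sᴴ, s)).det‖ = ‖s.det‖ ^ (2 * p) := by
    rw [det_mulLeftRight, det_conjTranspose, Fintype.card_fin, norm_mul, norm_pow, norm_pow,
      norm_star, two_mul, pow_add]
  have hscale (A : Set (SkewHerm p)) :
      μ (conjAct s '' A) = ENNReal.ofReal (‖s.det‖ ^ (2 * p)) * μ A := by
    rw [conjAct_eq_restrictSkewAdjoint, μ.addHaar_image_linearMap,
      LinearMap.abs_det_restrictSkewAdjoint, hdet]
  refine ⟨fun A _ => hscale A, fun hs hdiag A _ => ?_⟩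
  have hdiag' (i : Fin p) : 0 ≤ (s i i).re ∧ (s i i).im = 0 := ⟨(hdiag i).1.le, (hdiag i).2⟩
  rw [hscale, norm_det_eq_prod_re_of_isLowerTriangular (fun i j h => hs i j h) hdiag']

/-- Quasi-invariance of Lebesgue measure on `N*` under `m ↦ sᴴ m s`:
the measure of the image of `A` is `|det s|^{2p} · μ(A)`; in particular, for `s` lower
triangular with positive real diagonal, the factor is `θ(s)^{2p}` with
`θ(s) = s₁₁ ⋯ s_pp`. -/
theorem haar_scaling_conjAct (p : ℕ) (hp : 1 ≤ p)
    (μ : Measure (SkewHerm p)) [μ.IsAddHaarMeasure]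
    (s : Matrix (Fin p) (Fin p) ℂ) (hs : IsUnit s.det) :
    (∀ A : Set (SkewHerm p), MeasurableSet A →
      μ (conjAct s '' A) = ENNReal.ofReal (‖s.det‖ ^ (2 * p)) * μ A) ∧
    ((∀ i j : Fin p, i < j → s i j = 0) → (∀ i : Fin p, 0 < (s i i).re ∧ (s i i).im = 0) →
      ∀ A : Set (SkewHerm p), MeasurableSet A →
        μ (conjAct s '' A) = ENNReal.ofReal ((∏ i, (s i i).re) ^ (2 * p)) * μ A) :=
  haar_scaling_conjAct_general p μ s

end
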